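/- arXiv:2301.13575 — 2 statements merged into one kernel-verified Lean document; each statement's English description precedes it below -/
import Mathlib

section
/- Let α, r, T > 0, t ∈ [0,T], σ, K₁, K₂, Θ₁, Θ₂ > 0, μ > r, and suppose Θ₁ ≤ M₁, K₁ ≤ C (with C, M₁ > 0 constants). If Π* ≥ 0 solves σ²αe^{r(T-t)}Π* - (μ-r) = K₁Θ₁e^{-αΠ*K₁e^{r(T-t)}} - K₂Θ₂e^{αΠ*K₂e^{r(T-t)}}, then Π* ≤ (μ - r + C M₁)/(σ² α e^{r(T-t)}). -/
open Real

/-- Upper bound for a nonnegative solution of the first-order condition: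
Π* ≤ (μ - r + C·M₁)/(σ²·α·e^{r(T-t)}). -/
theorem stmt_3 (α r T t σ K₁ K₂ Θ₁ Θ₂ μ C M₁ : ℝ)
    (hα : 0 < α) (hr : 0 < r) (hT : 0 < T) (ht : t ∈ Set.Icc 0 T)
    (hσ : 0 < σ) (hK₁ : 0 < K₁) (hK₂ : 0 < K₂) (hΘ₁ : 0 < Θ₁) (hΘ₂ : 0 < Θ₂)
    (hμ : r < μ) (hC : 0 < C) (hM₁ : 0 < M₁)
    (hΘ₁M : Θ₁ ≤ M₁) (hK₁C : K₁ ≤ C)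
    (pstar : ℝ) (hpos : 0 ≤ pstar)
    (hstat : σ ^ 2 * α * exp (r * (T - t)) * pstar - (μ - r)
      = K₁ * Θ₁ * exp (-(α * pstar * K₁ * exp (r * (T - t))))
        - K₂ * Θ₂ * exp (α * pstar * K₂ * exp (r * (T - t)))) :
    pstar ≤ (μ - r + C * M₁) / (σ ^ 2 * α * exp (r * (T - t))) := by
  have he : 0 < exp (r * (T - t)) := exp_pos _
  have hden : 0 < σ ^ 2 * α * exp (r * (T - t)) := by positivity
  rw [le_div_iff₀ hden]
  have h1 : exp (-(α * pstar * K₁ * exp (r * (T - t)))) ≤ 1 := by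
    apply exp_le_one_iff.mpr
    simp only [neg_nonpos]
    positivity
  have h2 : 0 < K₂ * Θ₂ * exp (α * pstar * K₂ * exp (r * (T - t))) := by positivity
  nlinarith [mul_le_mul hK₁C hΘ₁M hΘ₁.le hC.le,
    mul_le_of_le_one_right (mul_pos hK₁ hΘ₁).le h1]
end

section
/- Fix r > 0, 0 ≤ t < T, K > 0 and p ∈ (0,1). The indifference price P(α) = ln(1 + (e^{αK} - 1)p)/(α e^{r(T-t)}) is a strictly increasing function of the risk-aversion parameter α > 0, with lim_{α→0⁺} P(α) = pK e^{-r(T-t)} and lim_{α→∞} P(α) = K e^{-r(T-t)}. -/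
/-!
The numerator `Λ(α) = log (1 + (e^{αK} - 1) p)` is the cumulant generating function of the
payoff `K X`, `X ∼ Bernoulli p`, so `P(α) = Λ(α) / α · e^{-r(T-t)}`. `Λ` is strictly convex
with `Λ(0) = 0`, hence its secant slope `Λ(α) / α` through the origin is strictly increasing.
It tends to `Λ'(0) = p K` as `α → 0⁺`, and to `K` as `α → ∞` because
`Λ(α) = α K + log (p + (1 - p) e^{-αK})`.
-/

open Real Filter Topology Set

lemma StrictConvexOn.strictMonoOn_div_self {f : ℝ → ℝ} (hf : StrictConvexOn ℝ (Ici 0) f)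
    (h0 : f 0 = 0) : StrictMonoOn (fun x => f x / x) (Ioi 0) := fun x hx y hy hxy => by
  simpa [h0] using hf.secant_strict_mono self_mem_Ici (mem_Ici.2 (le_of_lt hx))
    (mem_Ici.2 (le_of_lt hy)) (ne_of_gt hx) (ne_of_gt hy) hxy

noncomputable def bernoulliCGF (p K a : ℝ) : ℝ := log (1 + (exp (a * K) - 1) * p)

lemma one_add_exp_sub_one_mul_pos {p : ℝ} (hp : p ∈ Icc 0 1) (x : ℝ) :
    0 < 1 + (exp x - 1) * p := by
  nlinarith [exp_pos x, mul_nonneg hp.1 (exp_pos x).le, hp.2]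

section BernoulliCGF

variable {p K : ℝ}

@[simp]
lemma bernoulliCGF_zero : bernoulliCGF p K 0 = 0 := by
  simp [bernoulliCGF]

lemma hasDerivAt_bernoulliCGF (hp : p ∈ Icc 0 1) (a : ℝ) :
    HasDerivAt (bernoulliCGF p K) (K - K * (1 - p) / (1 + (exp (a * K) - 1) * p)) a := by
  have hD := one_add_exp_sub_one_mul_pos hp (a * K)
  refine (((((hasDerivAt_mul_const K).exp).sub_const 1).mul_const p).const_add 1 |>.log
    hD.ne').congr_deriv ?_
  rw [eq_sub_iff_add_eq, ← add_div, div_eq_iff hD.ne']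
  ring

lemma strictMono_deriv_bernoulliCGF (hp : p ∈ Ioo 0 1) (hK : 0 < K) :
    StrictMono (deriv (bernoulliCGF p K)) := by
  have hp' := Ioo_subset_Icc_self hp
  intro a b hab
  simp only [(hasDerivAt_bernoulliCGF hp' _).deriv, mul_div_assoc]
  have hexp : exp (a * K) < exp (b * K) := exp_lt_exp.2 (by nlinarith)
  have hD : 1 + (exp (a * K) - 1) * p < 1 + (exp (b * K) - 1) * p := by nlinarith [hp.1]
  have := div_lt_div_of_pos_left (sub_pos.2 hp.2) (one_add_exp_sub_one_mul_pos hp' _) hD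
  linarith [mul_lt_mul_of_pos_left this hK]

lemma strictConvexOn_bernoulliCGF (hp : p ∈ Ioo 0 1) (hK : 0 < K) :
    StrictConvexOn ℝ univ (bernoulliCGF p K) :=
  ((strictMono_deriv_bernoulliCGF hp hK).strictMonoOn _).strictConvexOn_of_deriv convex_univ
    fun a _ => (hasDerivAt_bernoulliCGF (Ioo_subset_Icc_self hp) a).continuousAt.continuousWithinAt

lemma strictMonoOn_bernoulliCGF_div_self (hp : p ∈ Ioo 0 1) (hK : 0 < K) :
    StrictMonoOn (fun a => bernoulliCGF p K a / a) (Ioi 0) :=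
  ((strictConvexOn_bernoulliCGF hp hK).subset (subset_univ _) (convex_Ici 0)).strictMonoOn_div_self
    bernoulliCGF_zero

lemma tendsto_bernoulliCGF_div_self_nhdsGT_zero (hp : p ∈ Icc 0 1) :
    Tendsto (fun a => bernoulliCGF p K a / a) (𝓝[>] 0) (𝓝 (p * K)) := by
  have h := (hasDerivAt_bernoulliCGF (K := K) hp 0).tendsto_slope_zero_right
  simp only [zero_mul, exp_zero, sub_self, add_zero, div_one, zero_add, bernoulliCGF_zero,
    sub_zero, smul_eq_mul] at h
  rw [show K - K * (1 - p) = p * K by ring] at h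
  simpa only [inv_mul_eq_div] using h

lemma bernoulliCGF_eq_mul_add_log (hp : p ∈ Ioc 0 1) (a : ℝ) :
    bernoulliCGF p K a = a * K + log (p + (1 - p) * exp (-(a * K))) := by
  have hpos : 0 < p + (1 - p) * exp (-(a * K)) := by
    nlinarith [hp.1, mul_nonneg (sub_nonneg.2 hp.2) (exp_pos (-(a * K))).le]
  have hfactor : 1 + (exp (a * K) - 1) * p = exp (a * K) * (p + (1 - p) * exp (-(a * K))) := by
    rw [mul_add, mul_left_comm, ← exp_add, add_neg_cancel, exp_zero]
    ring
  rw [bernoulliCGF, hfactor, log_mul (exp_ne_zero _) hpos.ne', log_exp]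

lemma tendsto_bernoulliCGF_div_self_atTop (hp : p ∈ Ioc 0 1) (hK : 0 < K) :
    Tendsto (fun a => bernoulliCGF p K a / a) atTop (𝓝 K) := by
  have hexp : Tendsto (fun a => exp (-(a * K))) atTop (𝓝 0) :=
    tendsto_exp_neg_atTop_nhds_zero.comp (tendsto_id.atTop_mul_const hK)
  have hlog : Tendsto (fun a => log (p + (1 - p) * exp (-(a * K)))) atTop (𝓝 (log p)) := by
    simpa using ((hexp.const_mul (1 - p)).const_add p).log (by simpa using hp.1.ne')
  have hsum := (hlog.div_atTop tendsto_id).const_add K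
  rw [add_zero] at hsum
  refine hsum.congr' ?_
  filter_upwards [eventually_gt_atTop 0] with a ha
  rw [bernoulliCGF_eq_mul_add_log hp, add_div, mul_div_cancel_left₀ _ ha.ne']
  rfl

end BernoulliCGF

theorem stmt_8_general (r T t K p : ℝ)
    (hK : 0 < K)
    (hp : p ∈ Set.Ioo (0 : ℝ) 1)
    (P : ℝ → ℝ)
    (hP : ∀ a : ℝ, P a = log (1 + (exp (a * K) - 1) * p) / (a * exp (r * (T - t)))) :
    StrictMonoOn P (Set.Ioi 0) ∧
      Tendsto P (nhdsWithin 0 (Set.Ioi 0)) (nhds (p * K * exp (-(r * (T - t))))) ∧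
      Tendsto P atTop (nhds (K * exp (-(r * (T - t))))) := by
  set c := exp (r * (T - t))
  have hP' : P = fun a => bernoulliCGF p K a / a / c := funext fun a => by
    rw [hP, div_div, bernoulliCGF]
  simp only [hP', exp_neg, ← div_eq_mul_inv]
  refine ⟨fun a ha b hb hab => ?_, ?_, ?_⟩
  · exact div_lt_div_of_pos_right (strictMonoOn_bernoulliCGF_div_self hp hK ha hb hab) (exp_pos _)
  · exact (tendsto_bernoulliCGF_div_self_nhdsGT_zero (Ioo_subset_Icc_self hp)).div_const c
  · exact (tendsto_bernoulliCGF_div_self_atTop (Ioo_subset_Ioc_self hp) hK).div_const c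

/-- The indifference price P(α) = ln(1+(e^{αK}-1)p)/(αe^{r(T-t)}) is strictly
increasing in the risk-aversion α > 0, with limit pKe^{-r(T-t)} as α → 0⁺ and
Ke^{-r(T-t)} as α → ∞. -/
theorem stmt_8 (r T t K p : ℝ)
    (hr : 0 < r) (ht0 : 0 ≤ t) (htT : t < T) (hK : 0 < K)
    (hp : p ∈ Set.Ioo (0 : ℝ) 1)
    (P : ℝ → ℝ)
    (hP : ∀ a : ℝ, P a = log (1 + (exp (a * K) - 1) * p) / (a * exp (r * (T - t)))) :
    StrictMonoOn P (Set.Ioi 0) ∧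
      Tendsto P (nhdsWithin 0 (Set.Ioi 0)) (nhds (p * K * exp (-(r * (T - t))))) ∧
      Tendsto P atTop (nhds (K * exp (-(r * (T - t))))) :=
  stmt_8_general r T t K p hK hp P hP
end
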